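/- arXiv:1407.2842 — 6 statements merged into one kernel-verified Lean document; each statement's English description precedes it below -/
import Mathlib

section
/- Let $X$ be a Fréchet space and let $A : X \to \mathbb{R}$ be a function satisfying: (1) $A$ is the pointwise limit of a sequence of continuous functions $X \to \mathbb{R}$; (2) $A(x - y) \le \max\{A(x), A(y)\}$ for all $x, y \in X$; (3) $A(c x) = A(x)$ for all $x \in X$ and all nonzero scalars $c$. Then $A$ is bounded above on $X$ and attains its maximum. -/
/-!
Write `f n → A` pointwise with `f n` continuous. Whenever every value of `A` lies below one of
countably many thresholds `t m`, the closed sets `{x | ∀ n ≥ N, f n x ≤ t m}` cover `X`, so by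
Baire one of them has interior, and `A ≤ t m` on a nonempty open set. The hypotheses (2) and (3)
propagate such a local bound to all of `X`: any `x` is `c⁻¹ • ((u + c • x) - u)`, and for small
`c ≠ 0` both `u + c • x` and `u` lie in the open set. With `t m = m` this bounds `A`; if the
supremum `M` were not attained, `t m = M - 1 / (m + 1)` would give a bound strictly below `M`.
-/

open Filter Topology

section LocalToGlobal

variable {𝕜 X : Type*} [NontriviallyNormedField 𝕜] [AddCommGroup X] [Module 𝕜 X]
  [TopologicalSpace X] [ContinuousAdd X] [ContinuousSMul 𝕜 X] {A : X → ℝ}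

theorem forall_le_of_nonempty_interior_le
    (h2 : ∀ x y : X, A (x - y) ≤ max (A x) (A y))
    (h3 : ∀ (c : 𝕜) (x : X), c ≠ 0 → A (c • x) = A x)
    {b : ℝ} (hb : (interior {x | A x ≤ b}).Nonempty) (x : X) : A x ≤ b := by
  obtain ⟨u, hu⟩ := hb
  have hu_nhds : {x | A x ≤ b} ∈ 𝓝 u := mem_interior_iff_mem_nhds.1 hu
  have hline : Tendsto (fun c : 𝕜 => u + c • x) (𝓝 0) (𝓝 u) := by
    simpa using ((continuous_id.smul continuous_const).const_add u).tendsto (0 : 𝕜)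
  obtain ⟨c, hc_near, hc_ne⟩ :=
    (((hline.eventually hu_nhds).filter_mono nhdsWithin_le_nhds).and
      (self_mem_nhdsWithin (s := {(0 : 𝕜)}ᶜ))).exists
  calc A x = A (c • x) := (h3 c x hc_ne).symm
    _ = A ((u + c • x) - u) := by rw [add_sub_cancel_left]
    _ ≤ max (A (u + c • x)) (A u) := h2 _ _
    _ ≤ b := max_le hc_near (mem_of_mem_nhds hu_nhds : u ∈ {x | A x ≤ b})

end LocalToGlobal

theorem BaireSpace.exists_nonempty_interior_le_of_tendsto {X : Type*} [TopologicalSpace X]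
    [BaireSpace X] [Nonempty X] {A : X → ℝ} {f : ℕ → X → ℝ} (hf : ∀ n, Continuous (f n))
    (hA : ∀ x, Tendsto (fun n => f n x) atTop (𝓝 (A x))) {t : ℕ → ℝ}
    (ht : ∀ x, ∃ m, A x < t m) : ∃ m, (interior {x | A x ≤ t m}).Nonempty := by
  let E : ℕ × ℕ → Set X := fun p => ⋂ n ≥ p.2, {x | f n x ≤ t p.1}
  have hE_closed : ∀ p, IsClosed (E p) := fun p =>
    isClosed_biInter fun n _ => isClosed_le (hf n) continuous_const
  have hE_cover : ⋃ p, E p = Set.univ := by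
    refine Set.eq_univ_of_forall fun x => ?_
    obtain ⟨m, hm⟩ := ht x
    obtain ⟨N, hN⟩ := ((hA x).eventually_lt_const hm).exists_forall_of_atTop
    exact Set.mem_iUnion.2 ⟨(m, N), Set.mem_iInter₂.2 fun n hn => (hN n hn).le⟩
  obtain ⟨⟨m, N⟩, hint⟩ := nonempty_interior_of_iUnion_of_closed hE_closed hE_cover
  refine ⟨m, hint.mono (interior_mono fun x hx => ?_)⟩
  have hx : ∀ n ≥ N, f n x ≤ t m := by simpa [E] using hx
  exact le_of_tendsto (hA x) (eventually_atTop.2 ⟨N, hx⟩)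

theorem baire_one_subadditive_attains_max_general {𝕜 X : Type*} [RCLike 𝕜] [AddCommGroup X]
    [Module 𝕜 X] [UniformSpace X] [IsUniformAddGroup X]
    [ContinuousSMul 𝕜 X] [CompleteSpace X] [TopologicalSpace.MetrizableSpace X]
    (A : X → ℝ)
    (h1 : ∃ f : ℕ → X → ℝ, (∀ n, Continuous (f n)) ∧
      ∀ x, Tendsto (fun n => f n x) atTop (nhds (A x)))
    (h2 : ∀ x y : X, A (x - y) ≤ max (A x) (A y))
    (h3 : ∀ (c : 𝕜) (x : X), c ≠ 0 → A (c • x) = A x) :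
    ∃ x₀ : X, ∀ x : X, A x ≤ A x₀ := by
  obtain ⟨f, hf, hA⟩ := h1
  have : (uniformity X).IsCountablyGenerated := IsUniformAddGroup.uniformity_countably_generated
  have bound_of_thresholds {t : ℕ → ℝ} (ht : ∀ x, ∃ m, A x < t m) : ∃ m, ∀ x, A x ≤ t m :=
    (BaireSpace.exists_nonempty_interior_le_of_tendsto hf hA ht).imp fun _ hm =>
      forall_le_of_nonempty_interior_le h2 h3 hm
  obtain ⟨c, hc⟩ := bound_of_thresholds fun x => exists_nat_gt (A x)
  have hbdd : BddAbove (Set.range A) := ⟨c, Set.forall_mem_range.2 hc⟩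
  by_contra! hnot
  have hlt_sup (x : X) : A x < ⨆ y, A y :=
    let ⟨y, hy⟩ := hnot x; hy.trans_le (le_ciSup hbdd y)
  obtain ⟨m, hm⟩ := bound_of_thresholds (t := fun m => (⨆ y, A y) - 1 / (m + 1)) fun x =>
    (exists_nat_one_div_lt (sub_pos.2 (hlt_sup x))).imp fun _ h => by linarith
  have hsup_le : (⨆ y, A y) ≤ (⨆ y, A y) - 1 / (m + 1) := ciSup_le hm
  have : (0 : ℝ) < 1 / (m + 1) := by positivity
  linarith

/-- Let `X` be a Fréchet space and `A : X → ℝ` a function that (1) is a pointwise limit of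
continuous functions, (2) satisfies `A (x - y) ≤ max (A x) (A y)`, and (3) is invariant under
nonzero scalings. Then `A` is bounded above and attains its maximum. -/
theorem baire_one_subadditive_attains_max {𝕜 X : Type*} [RCLike 𝕜] [AddCommGroup X]
    [Module 𝕜 X] [Module ℝ X] [IsScalarTower ℝ 𝕜 X] [UniformSpace X] [IsUniformAddGroup X]
    [ContinuousSMul 𝕜 X] [CompleteSpace X] [TopologicalSpace.MetrizableSpace X]
    [LocallyConvexSpace ℝ X]
    (A : X → ℝ)
    (h1 : ∃ f : ℕ → X → ℝ, (∀ n, Continuous (f n)) ∧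
      ∀ x, Tendsto (fun n => f n x) atTop (nhds (A x)))
    (h2 : ∀ x y : X, A (x - y) ≤ max (A x) (A y))
    (h3 : ∀ (c : 𝕜) (x : X), c ≠ 0 → A (c • x) = A x) :
    ∃ x₀ : X, ∀ x : X, A x ≤ A x₀ :=
  baire_one_subadditive_attains_max_general A h1 h2 h3
end

section
/- Let $X$ be a Fréchet space and $A : X \to \mathbb{R}$ a pointwise limit of continuous functions with $A(x-y) \le \max\{A(x), A(y)\}$ and $A(cx) = A(x)$ for $c \ne 0$. If $U$ is any subset of $X$ with nonempty interior, then $\sup_{x \in U} A(x) = \sup_{x \in X} A(x)$. -/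
open Filter Topology

/-! Scaling `x` by a small nonzero `c` moves `c • x + u` into any neighbourhood `V` of `u`, and then
`A x = A (c • x) ≤ max (A (c • x + u)) (A u)` is bounded by the bound of `A` on `V`. -/

theorem exists_ne_zero_smul_add_mem_of_mem_nhds {𝕜 X : Type*} [NontriviallyNormedField 𝕜]
    [AddCommGroup X] [Module 𝕜 X] [TopologicalSpace X] [ContinuousAdd X] [ContinuousSMul 𝕜 X]
    {u : X} {V : Set X} (hV : V ∈ 𝓝 u) (x : X) : ∃ c : 𝕜, c ≠ 0 ∧ c • x + u ∈ V := by
  have hlim : Tendsto (fun c : 𝕜 => c • x + u) (𝓝[≠] 0) (𝓝 u) := by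
    simpa using (((tendsto_id (x := 𝓝 (0 : 𝕜))).smul_const x).add_const u).mono_left
      nhdsWithin_le_nhds
  exact ((hlim.eventually hV).and self_mem_nhdsWithin).exists.imp fun _ h => ⟨h.2, h.1⟩

theorem le_of_forall_mem_nhds_le {𝕜 X α : Type*} [NontriviallyNormedField 𝕜] [AddCommGroup X]
    [Module 𝕜 X] [TopologicalSpace X] [ContinuousAdd X] [ContinuousSMul 𝕜 X] [LinearOrder α]
    {A : X → α} (hsub : ∀ x y : X, A (x - y) ≤ max (A x) (A y))
    (hsmul : ∀ (c : 𝕜) (x : X), c ≠ 0 → A (c • x) = A x)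
    {u : X} {V : Set X} (hV : V ∈ 𝓝 u) {M : α} (hM : ∀ y ∈ V, A y ≤ M) (x : X) : A x ≤ M := by
  obtain ⟨c, hc, hcV⟩ := exists_ne_zero_smul_add_mem_of_mem_nhds (𝕜 := 𝕜) hV x
  calc A x = A ((c • x + u) - u) := by rw [add_sub_cancel_right, hsmul c x hc]
    _ ≤ max (A (c • x + u)) (A u) := hsub _ _
    _ ≤ M := max_le (hM _ hcV) (hM u (mem_of_mem_nhds hV))

theorem sup_on_set_with_interior_eq_global_sup_general {𝕜 X : Type*} [RCLike 𝕜] [AddCommGroup X]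
    [Module 𝕜 X] [UniformSpace X] [IsUniformAddGroup X]
    [ContinuousSMul 𝕜 X]
    (A : X → ℝ)
    (h2 : ∀ x y : X, A (x - y) ≤ max (A x) (A y))
    (h3 : ∀ (c : 𝕜) (x : X), c ≠ 0 → A (c • x) = A x)
    (U : Set X) (hU : (interior U).Nonempty) :
    ∀ M : ℝ, (∀ x ∈ U, A x ≤ M) ↔ (∀ x : X, A x ≤ M) := by
  intro M
  obtain ⟨u, hu⟩ := hU
  exact ⟨le_of_forall_mem_nhds_le h2 h3 (mem_interior_iff_mem_nhds.mp hu), fun hM x _ => hM x⟩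

/-- Let `X` be a Fréchet space and `A : X → ℝ` a pointwise limit of continuous functions with
`A (x - y) ≤ max (A x) (A y)` and `A (c • x) = A x` for `c ≠ 0`. If `U ⊆ X` has nonempty
interior, then the supremum of `A` over `U` equals the supremum of `A` over `X`
(expressed via equality of the sets of upper bounds). -/
theorem sup_on_set_with_interior_eq_global_sup {𝕜 X : Type*} [RCLike 𝕜] [AddCommGroup X]
    [Module 𝕜 X] [Module ℝ X] [IsScalarTower ℝ 𝕜 X] [UniformSpace X] [IsUniformAddGroup X]
    [ContinuousSMul 𝕜 X] [CompleteSpace X] [TopologicalSpace.MetrizableSpace X]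
    [LocallyConvexSpace ℝ X]
    (A : X → ℝ)
    (h1 : ∃ f : ℕ → X → ℝ, (∀ n, Continuous (f n)) ∧
      ∀ x, Tendsto (fun n => f n x) atTop (nhds (A x)))
    (h2 : ∀ x y : X, A (x - y) ≤ max (A x) (A y))
    (h3 : ∀ (c : 𝕜) (x : X), c ≠ 0 → A (c • x) = A x)
    (U : Set X) (hU : (interior U).Nonempty) :
    ∀ M : ℝ, (∀ x ∈ U, A x ≤ M) ↔ (∀ x : X, A x ≤ M) :=
  sup_on_set_with_interior_eq_global_sup_general A h2 h3 U hU
end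

section
/- Let $X$ be a Fréchet space, $(y_n)$ a sequence in $X'$, and suppose that for each $x \in X$ the finite part limit of $\langle y_n, x\rangle$ exists, with infinite parts $\sum_{\alpha>0} n^{\alpha} R_{\alpha}(x)$. Define $A(x) = 0$ if the infinite part of $\langle y_n, x\rangle$ vanishes and $A(x) = \max\{\alpha > 0 : R_{\alpha}(x) \ne 0\}$ otherwise. Then $A(x) = \lim_{n\to\infty} \frac{\ln(|\langle y_n, x\rangle| + 1)}{\ln n}$ for every $x \in X$. -/
/-! Write `a n = ∑ nᵅ R α + z n`. If `α₀` is the top exponent of the infinite part (or `α₀ = 0`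
when it vanishes), then `n^(-α₀) (‖a n‖ + 1)` has a positive limit `L` (namely `‖R α₀‖`, resp.
`‖lim z‖ + 1`). Taking logarithms, `log (‖a n‖ + 1) = α₀ log n + log L + o(1)`, and dividing by
`log n` gives the limit `α₀`. -/

open Filter

/-- A standard finite-part decomposition of a scalar sequence. -/
def FPDecomp {K : Type*} [RCLike K] (a : ℕ → K) (R : ℝ →₀ K) (z : ℕ → K) (Y : K) : Prop :=
  (∀ α ∈ R.support, (0 : ℝ) < α) ∧
  (∀ n : ℕ, a n = ∑ α ∈ R.support, ((n : ℝ) ^ α) • R α + z n) ∧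
  Tendsto z atTop (nhds Y)

open Topology

theorem tendsto_natCast_rpow_neg_atTop {α : ℝ} (hα : 0 < α) :
    Tendsto (fun n : ℕ => (n : ℝ) ^ (-α)) atTop (𝓝 0) :=
  (tendsto_rpow_neg_atTop hα).comp tendsto_natCast_atTop_atTop

theorem tendsto_log_div_log_of_tendsto_rpow_neg_mul {b : ℕ → ℝ} {α L : ℝ} (hL : 0 < L)
    (hb : Tendsto (fun n : ℕ => (n : ℝ) ^ (-α) * b n) atTop (𝓝 L)) :
    Tendsto (fun n : ℕ => Real.log (b n) / Real.log n) atTop (𝓝 α) := by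
  have hlogn : Tendsto (fun n : ℕ => Real.log n) atTop atTop :=
    Real.tendsto_log_atTop.comp tendsto_natCast_atTop_atTop
  have hlog : Tendsto (fun n : ℕ => Real.log ((n : ℝ) ^ (-α) * b n) / Real.log n + α) atTop
      (𝓝 α) := by
    simpa using
      (((Real.continuousAt_log hL.ne').tendsto.comp hb).div_atTop hlogn).add_const α
  refine hlog.congr' ?_
  filter_upwards [eventually_gt_atTop 1, hb.eventually (lt_mem_nhds hL)] with n hn hbn
  have hn0 : (0 : ℝ) < n := by positivity
  have hlogn_pos : 0 < Real.log n := Real.log_pos (by exact_mod_cast hn)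
  have hbn0 : b n ≠ 0 := by
    rintro h
    simp [h] at hbn
  rw [Real.log_mul (Real.rpow_pos_of_pos hn0 _).ne' hbn0, Real.log_rpow hn0]
  field_simp
  ring

namespace FPDecomp

variable {K : Type*} [RCLike K] {a : ℕ → K} {R : ℝ →₀ K} {z : ℕ → K} {Y : K}

theorem tendsto_rpow_neg_smul_of_isGreatest (h : FPDecomp a R z Y) {α : ℝ}
    (hα : IsGreatest (R.support : Set ℝ) α) :
    Tendsto (fun n : ℕ => ((n : ℝ) ^ (-α)) • a n) atTop (𝓝 (R α)) := by
  obtain ⟨hpos, ha, hz⟩ := h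
  obtain ⟨hαR, hmax⟩ := hα
  have hα0 : 0 < α := hpos α hαR
  have hterm : ∀ β ∈ R.support, Tendsto (fun n : ℕ => ((n : ℝ) ^ (β - α)) • R β) atTop
      (𝓝 (if β = α then R β else 0)) := by
    intro β hβ
    by_cases hβα : β = α
    · simp [hβα]
    · have hlt : 0 < α - β := sub_pos.2 ((hmax hβ).lt_of_ne hβα)
      simpa [hβα] using (tendsto_natCast_rpow_neg_atTop hlt).smul_const (R β)
  have hsum : Tendsto (fun n : ℕ => ∑ β ∈ R.support, ((n : ℝ) ^ (β - α)) • R β) atTop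
      (𝓝 (R α)) := by
    simpa [Finset.sum_ite_eq', show α ∈ R.support from hαR] using tendsto_finsetSum _ hterm
  have hrem : Tendsto (fun n : ℕ => ((n : ℝ) ^ (-α)) • z n) atTop (𝓝 0) := by
    simpa using (tendsto_natCast_rpow_neg_atTop hα0).smul hz
  refine (by simpa using hsum.add hrem : Tendsto _ atTop (𝓝 (R α))).congr' ?_
  filter_upwards [eventually_ge_atTop 1] with n hn
  have hn0 : (0 : ℝ) < n := by exact_mod_cast hn
  rw [ha n, smul_add, Finset.smul_sum]
  congr 1
  refine Finset.sum_congr rfl fun β _ => ?_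
  rw [smul_smul, ← Real.rpow_add hn0, neg_add_eq_sub]

theorem tendsto_log_norm_add_one_div_log_of_isGreatest (h : FPDecomp a R z Y) {α : ℝ}
    (hα : IsGreatest (R.support : Set ℝ) α) :
    Tendsto (fun n : ℕ => Real.log (‖a n‖ + 1) / Real.log n) atTop (𝓝 α) := by
  have hRα : 0 < ‖R α‖ := norm_pos_iff.2 (Finsupp.mem_support_iff.1 hα.1)
  refine tendsto_log_div_log_of_tendsto_rpow_neg_mul hRα ?_
  have hlim := (h.tendsto_rpow_neg_smul_of_isGreatest hα).norm.add
    (tendsto_natCast_rpow_neg_atTop (h.1 α hα.1))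
  rw [add_zero] at hlim
  refine hlim.congr fun n => ?_
  rw [norm_smul, Real.norm_of_nonneg (Real.rpow_nonneg n.cast_nonneg _), mul_add, mul_one]

theorem tendsto_log_norm_add_one_div_log_of_eq_zero (h : FPDecomp a 0 z Y) :
    Tendsto (fun n : ℕ => Real.log (‖a n‖ + 1) / Real.log n) atTop (𝓝 0) := by
  obtain ⟨-, ha, hz⟩ := h
  refine tendsto_log_div_log_of_tendsto_rpow_neg_mul (L := ‖Y‖ + 1) (by positivity) ?_
  simpa [ha] using hz.norm.add_const 1

end FPDecomp

theorem top_exponent_limit_formula_general {𝕜 X : Type*} [RCLike 𝕜] [AddCommGroup X]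
    [Module 𝕜 X] [UniformSpace X]
    (y : ℕ → X →L[𝕜] 𝕜) (R : X → ℝ →₀ 𝕜) (z : X → ℕ → 𝕜)
    (hdec : ∀ x : X, ∃ Yx : 𝕜, FPDecomp (fun n => y n x) (R x) (z x) Yx)
    (A : X → ℝ)
    (hA : ∀ x : X, (R x = 0 → A x = 0) ∧
      (R x ≠ 0 → R x (A x) ≠ 0 ∧ ∀ α ∈ (R x).support, α ≤ A x)) :
    ∀ x : X, Tendsto (fun n : ℕ => Real.log (‖y n x‖ + 1) / Real.log n) atTop (nhds (A x)) := by
  intro x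
  obtain ⟨Y, hx⟩ := hdec x
  by_cases hR : R x = 0
  · rw [(hA x).1 hR]
    exact (hR ▸ hx).tendsto_log_norm_add_one_div_log_of_eq_zero
  · obtain ⟨hRA, hmax⟩ := (hA x).2 hR
    exact hx.tendsto_log_norm_add_one_div_log_of_isGreatest
      ⟨Finsupp.mem_support_iff.2 hRA, hmax⟩

/-- Let `X` be a Fréchet space, `(y n)` a sequence in `X'` whose evaluations all admit finite
part limits, with coefficients `R x` and finite parts `z x`.  Let `A x` be the largest exponent
appearing in the infinite part of `⟨yₙ, x⟩` (and `0` if the infinite part vanishes). Then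
`A x = lim_{n} ln(|⟨yₙ, x⟩| + 1) / ln n` for every `x`. -/
theorem top_exponent_limit_formula {𝕜 X : Type*} [RCLike 𝕜] [AddCommGroup X]
    [Module 𝕜 X] [Module ℝ X] [IsScalarTower ℝ 𝕜 X] [UniformSpace X] [IsUniformAddGroup X]
    [ContinuousSMul 𝕜 X] [CompleteSpace X] [TopologicalSpace.MetrizableSpace X]
    [LocallyConvexSpace ℝ X]
    (y : ℕ → X →L[𝕜] 𝕜) (R : X → ℝ →₀ 𝕜) (z : X → ℕ → 𝕜)
    (hdec : ∀ x : X, ∃ Yx : 𝕜, FPDecomp (fun n => y n x) (R x) (z x) Yx)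
    (A : X → ℝ)
    (hA : ∀ x : X, (R x = 0 → A x = 0) ∧
      (R x ≠ 0 → R x (A x) ≠ 0 ∧ ∀ α ∈ (R x).support, α ≤ A x)) :
    ∀ x : X, Tendsto (fun n : ℕ => Real.log (‖y n x‖ + 1) / Real.log n) atTop (nhds (A x)) :=
  top_exponent_limit_formula_general y R z hdec A hA
end

section
/- Let $X$ be a Fréchet space, $(y_n)$ a sequence in $X'$, and suppose that for each $x \in X$ the finite part limit of $\langle y_n, x\rangle$ exists. Define $A(x) = \max\{\alpha > 0 : R_{\alpha}(x) \ne 0\}$ (or $0$ if the infinite part vanishes). Then $A$ is bounded above on $X$ and attains its maximum; moreover if $\widetilde{\alpha} = \max_{x \in X} A(x) > 0$ then $R_{\widetilde{\alpha}}$ is a nonzero continuous linear functional on $X$, given by $R_{\widetilde{\alpha}}(x) = \lim_{n\to\infty} n^{-\widetilde{\alpha}} \langle y_n, x\rangle$. -/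
open Filter

/-!
For `k > 0`, the `x` with `⟨yₙ, x⟩ = O(nᵏ)` form a subspace which is a countable union of the
closed sets `{x | ‖yₙ x‖ ≤ C nᵏ for n ≥ N}`, and the finite-part expansion identifies it with the
sublevel set `{A ≤ k}`. By Baire's theorem, whenever countably many of these subspaces cover `X`
one of them has interior and is therefore all of `X`. Levels `k = 1, 2, …` then bound `A`, and if
the supremum `s` of `A` were not attained, levels increasing to `s` would cover `X` while staying
below `s`. At the top exponent `α̃`, `n^{-α̃} ⟨yₙ, x⟩ → R_α̃(x)` for every `x`, and
Banach–Steinhaus makes this pointwise limit continuous.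
-/

open Topology Asymptotics

lemma tendsto_natCast_rpow_neg {γ : ℝ} (hγ : 0 < γ) :
    Tendsto (fun n : ℕ => (n : ℝ) ^ (-γ)) atTop (𝓝 0) :=
  (tendsto_rpow_neg_atTop hγ).comp tendsto_natCast_atTop_atTop

def IsTopExponent {K : Type*} [Zero K] (R : ℝ →₀ K) (β : ℝ) : Prop :=
  (R = 0 → β = 0) ∧ (R ≠ 0 → R β ≠ 0 ∧ ∀ α ∈ R.support, α ≤ β)

namespace IsTopExponent

variable {K : Type*} [Zero K] {R : ℝ →₀ K} {β : ℝ}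

lemma le_of_mem_support (h : IsTopExponent R β) {α : ℝ} (hα : α ∈ R.support) : α ≤ β :=
  (h.2 (Finsupp.support_nonempty_iff.mp ⟨α, hα⟩)).2 α hα

lemma pos (h : IsTopExponent R β) (hR : R ≠ 0) (hpos : ∀ α ∈ R.support, 0 < α) : 0 < β := by
  obtain ⟨α, hα⟩ := Finsupp.support_nonempty_iff.mpr hR
  exact (hpos α hα).trans_le (h.le_of_mem_support hα)

lemma nonneg (h : IsTopExponent R β) (hpos : ∀ α ∈ R.support, 0 < α) : 0 ≤ β := by
  by_cases hR : R = 0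
  · exact (h.1 hR).ge
  · exact (h.pos hR hpos).le

end IsTopExponent

namespace FPDecomp

variable {K : Type*} [RCLike K] {a : ℕ → K} {R : ℝ →₀ K} {z : ℕ → K} {Y : K}

lemma tendsto_rpow_neg_smul (h : FPDecomp a R z Y) {β : ℝ} (hβ : 0 < β)
    (hle : ∀ α ∈ R.support, α ≤ β) :
    Tendsto (fun n : ℕ => ((n : ℝ) ^ (-β)) • a n) atTop (𝓝 (R β)) := by
  obtain ⟨-, ha, hz⟩ := h
  have hterm : ∀ α ∈ R.support, Tendsto (fun n : ℕ => ((n : ℝ) ^ (α - β)) • R α) atTop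
      (𝓝 (if α = β then R α else 0)) := by
    intro α hα
    split_ifs with hαβ
    · simp only [hαβ, sub_self, Real.rpow_zero, one_smul, tendsto_const_nhds]
    · have hlt : 0 < β - α := sub_pos.mpr ((hle α hα).lt_of_ne hαβ)
      simpa using (tendsto_natCast_rpow_neg hlt).smul_const (R α)
  have hcoeff : (if β ∈ R.support then R β else 0) = R β := by
    split_ifs with hβR
    · rfl
    · exact (Finsupp.notMem_support_iff.mp hβR).symm
  have hlim := (tendsto_finsetSum _ hterm).add ((tendsto_natCast_rpow_neg hβ).smul hz)
  rw [Finset.sum_ite_eq', hcoeff, zero_smul, add_zero] at hlim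
  refine hlim.congr' ?_
  filter_upwards [eventually_gt_atTop 0] with n hn
  have hn : (0 : ℝ) < n := Nat.cast_pos.mpr hn
  rw [ha n, smul_add, Finset.smul_sum]
  congr 1
  refine Finset.sum_congr rfl fun α _ => ?_
  rw [smul_smul, ← Real.rpow_add hn, neg_add_eq_sub]

lemma isBigO_rpow (h : FPDecomp a R z Y) {β : ℝ} (hβ : 0 < β) (hle : ∀ α ∈ R.support, α ≤ β) :
    a =O[atTop] fun n : ℕ => (n : ℝ) ^ β := by
  have hsmul := (isBigO_refl (fun n : ℕ => (n : ℝ) ^ β) atTop).smul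
    ((h.tendsto_rpow_neg_smul hβ hle).isBigO_one ℝ)
  refine hsmul.congr' ?_ ?_
  · filter_upwards [eventually_gt_atTop 0] with n hn
    rw [smul_smul, ← Real.rpow_add (Nat.cast_pos.mpr hn), add_neg_cancel, Real.rpow_zero,
      one_smul]
  · simp

lemma le_of_isBigO_rpow (h : FPDecomp a R z Y) {β k : ℝ} (hβ : 0 < β) (hRβ : R β ≠ 0)
    (hle : ∀ α ∈ R.support, α ≤ β) (hO : a =O[atTop] fun n : ℕ => (n : ℝ) ^ k) : β ≤ k := by
  by_contra! hkβ
  have hsmul := (isBigO_refl (fun n : ℕ => (n : ℝ) ^ (-β)) atTop).smul hO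
  have hzero : Tendsto (fun n : ℕ => ((n : ℝ) ^ (-β)) • a n) atTop (𝓝 0) := by
    refine hsmul.trans_tendsto ((tendsto_natCast_rpow_neg (sub_pos.mpr hkβ)).congr' ?_)
    filter_upwards [eventually_gt_atTop 0] with n hn
    rw [smul_eq_mul, ← Real.rpow_add (Nat.cast_pos.mpr hn), neg_sub, sub_eq_neg_add]
  exact hRβ (tendsto_nhds_unique (h.tendsto_rpow_neg_smul hβ hle) hzero)

lemma isBigO_rpow_iff (h : FPDecomp a R z Y) {β k : ℝ} (hk : 0 < k)
    (htop : IsTopExponent R β) : (a =O[atTop] fun n : ℕ => (n : ℝ) ^ k) ↔ β ≤ k := by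
  refine ⟨fun hO => ?_, fun hβk =>
    h.isBigO_rpow hk fun _ hα => (htop.le_of_mem_support hα).trans hβk⟩
  by_cases hR : R = 0
  · exact (htop.1 hR).trans_le hk.le
  · exact h.le_of_isBigO_rpow (htop.pos hR h.1) (htop.2 hR).1
      (fun _ => htop.le_of_mem_support) hO

end FPDecomp

section BigOSubmodule

variable {𝕜 X E : Type*} [NontriviallyNormedField 𝕜] [AddCommGroup X] [Module 𝕜 X]
  [TopologicalSpace X] [SeminormedAddCommGroup E] [NormedSpace 𝕜 E]

def bigOSubmodule (y : ℕ → X →L[𝕜] E) (g : ℕ → ℝ) : Submodule 𝕜 X where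
  carrier := {x | (fun n => y n x) =O[atTop] g}
  add_mem' hx hx' := by simpa only [Set.mem_ofPred_eq, map_add] using hx.add hx'
  zero_mem' := by simpa only [Set.mem_ofPred_eq, map_zero] using isBigO_zero g atTop
  smul_mem' c x hx := by
    simp only [Set.mem_ofPred_eq, map_smul]
    exact hx.const_smul_left c

lemma coe_bigOSubmodule_eq_iUnion (y : ℕ → X →L[𝕜] E) (g : ℕ → ℝ) :
    (bigOSubmodule y g : Set X) =
      ⋃ p : ℕ × ℕ, {x | ∀ n ≥ p.2, ‖y n x‖ ≤ p.1 * ‖g n‖} := by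
  ext x
  simp only [SetLike.mem_coe, bigOSubmodule, Submodule.mem_mk, AddSubmonoid.mem_mk,
    AddSubsemigroup.mem_mk, Set.mem_ofPred_eq, Set.mem_iUnion, isBigO_iff, eventually_atTop,
    Prod.exists]
  constructor
  · rintro ⟨c, N, hN⟩
    exact ⟨⌈c⌉₊, N, fun n hn => (hN n hn).trans (by gcongr; exact Nat.le_ceil c)⟩
  · rintro ⟨C, N, hN⟩
    exact ⟨C, N, hN⟩

lemma isClosed_setOf_forall_ge_norm_le (y : ℕ → X →L[𝕜] E) (g : ℕ → ℝ) (C N : ℕ) :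
    IsClosed {x | ∀ n ≥ N, ‖y n x‖ ≤ C * ‖g n‖} := by
  simp only [Set.ofPred_forall]
  exact isClosed_iInter fun n => isClosed_iInter fun _ =>
    isClosed_le (y n).continuous.norm continuous_const

lemma exists_bigOSubmodule_eq_top [IsTopologicalAddGroup X] [ContinuousSMul 𝕜 X]
    [BaireSpace X] {ι : Type*} [Countable ι] (y : ℕ → X →L[𝕜] E) (g : ι → ℕ → ℝ)
    (hcover : ∀ x, ∃ i, x ∈ bigOSubmodule y (g i)) : ∃ i, bigOSubmodule y (g i) = ⊤ := by
  have hunion :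
      ⋃ q : ι × ℕ × ℕ, {x | ∀ n ≥ q.2.2, ‖y n x‖ ≤ q.2.1 * ‖g q.1 n‖} = Set.univ := by
    refine Set.eq_univ_of_forall fun x => ?_
    obtain ⟨i, hi⟩ := hcover x
    rw [← SetLike.mem_coe, coe_bigOSubmodule_eq_iUnion, Set.mem_iUnion] at hi
    obtain ⟨p, hp⟩ := hi
    exact Set.mem_iUnion.mpr ⟨(i, p), hp⟩
  obtain ⟨⟨i, C, N⟩, hint⟩ := nonempty_interior_of_iUnion_of_closed
    (fun q : ι × ℕ × ℕ => isClosed_setOf_forall_ge_norm_le y (g q.1) q.2.1 q.2.2) hunion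
  refine ⟨i, (bigOSubmodule y (g i)).eq_top_of_nonempty_interior'
    (hint.mono (interior_mono ?_))⟩
  rw [coe_bigOSubmodule_eq_iUnion]
  exact Set.subset_iUnion_of_subset (C, N) subset_rfl

end BigOSubmodule

lemma exists_forall_le_of_sublevel_cover {α : Type*} [Nonempty α] {f : α → ℝ}
    (hf : ∀ x, 0 ≤ f x)
    (h : ∀ D : ℕ → ℝ, (∀ i, 0 < D i) → (∀ x, ∃ i, f x ≤ D i) → ∃ i, ∀ x, f x ≤ D i) :
    ∃ x₀, ∀ x, f x ≤ f x₀ := by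
  obtain ⟨m, hm⟩ := h (fun i => i + 1) (fun i => by positivity)
    fun x => (exists_nat_ge (f x)).imp fun i hi => by linarith
  have hbdd : BddAbove (Set.range f) := ⟨m + 1, Set.forall_mem_range.mpr hm⟩
  by_contra! hnot
  set s := sSup (Set.range f)
  have hlt : ∀ x, f x < s := fun x =>
    let ⟨x', hx'⟩ := hnot x
    hx'.trans_le (le_csSup hbdd ⟨x', rfl⟩)
  obtain ⟨x₁⟩ := ‹Nonempty α›
  obtain ⟨u, -, hu, hus⟩ := exists_seq_strictMono_tendsto' ((hf x₁).trans_lt (hlt x₁))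
  obtain ⟨i, hi⟩ := h u (fun i => (hu i).1)
    fun x => ((hus.eventually (eventually_gt_nhds (hlt x))).exists).imp fun _ => le_of_lt
  obtain ⟨_, ⟨x, rfl⟩, hx⟩ := exists_lt_of_lt_csSup (Set.range_nonempty f) (hu i).2
  exact (hx.trans_le (hi x)).false

theorem top_exponent_attains_max_and_top_coefficient_continuous_general {𝕜 X : Type*} [RCLike 𝕜]
    [AddCommGroup X] [Module 𝕜 X]
    [UniformSpace X] [IsUniformAddGroup X] [ContinuousSMul 𝕜 X] [CompleteSpace X]
    [TopologicalSpace.MetrizableSpace X]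
    (y : ℕ → X →L[𝕜] 𝕜) (R : X → ℝ →₀ 𝕜) (z : X → ℕ → 𝕜)
    (hdec : ∀ x : X, ∃ Yx : 𝕜, FPDecomp (fun n => y n x) (R x) (z x) Yx)
    (A : X → ℝ)
    (hA : ∀ x : X, (R x = 0 → A x = 0) ∧
      (R x ≠ 0 → R x (A x) ≠ 0 ∧ ∀ α ∈ (R x).support, α ≤ A x)) :
    ∃ x₀ : X, (∀ x : X, A x ≤ A x₀) ∧
      (0 < A x₀ →
        (∃ Rc : X →L[𝕜] 𝕜, Rc ≠ 0 ∧ ∀ x : X, Rc x = R x (A x₀)) ∧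
        ∀ x : X, Tendsto (fun n : ℕ => ((n : ℝ) ^ (-(A x₀))) • y n x)
          atTop (nhds (R x (A x₀)))) := by
  -- so that `X` is completely metrizable, hence Baire and barrelled
  have : (uniformity X).IsCountablyGenerated := by
    rw [uniformity_eq_comap_nhds_zero X]
    infer_instance
  choose Y hY using hdec
  have htop : ∀ x, IsTopExponent (R x) (A x) := hA
  have hmem : ∀ x {k : ℝ}, 0 < k →
      (x ∈ bigOSubmodule y (fun n => (n : ℝ) ^ k) ↔ A x ≤ k) :=
    fun x _ hk => (hY x).isBigO_rpow_iff hk (htop x)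
  obtain ⟨x₀, hx₀⟩ : ∃ x₀, ∀ x, A x ≤ A x₀ := by
    refine exists_forall_le_of_sublevel_cover (fun x => (htop x).nonneg (hY x).1)
      fun D hD hcover => ?_
    obtain ⟨i, hi⟩ := exists_bigOSubmodule_eq_top y (fun i n => (n : ℝ) ^ D i)
      fun x => (hcover x).imp fun i hi => (hmem x (hD i)).2 hi
    exact ⟨i, fun x => (hmem x (hD i)).1 (hi ▸ Submodule.mem_top)⟩
  refine ⟨x₀, hx₀, fun hpos => ?_⟩
  have htend : ∀ x,
      Tendsto (fun n : ℕ => ((n : ℝ) ^ (-(A x₀))) • y n x) atTop (𝓝 (R x (A x₀))) :=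
    fun x => (hY x).tendsto_rpow_neg_smul hpos
      fun α hα => ((htop x).le_of_mem_support hα).trans (hx₀ x)
  let Rc : X →L[𝕜] 𝕜 := continuousLinearMapOfTendsto
    (fun n : ℕ => ((n : ℝ) ^ (-(A x₀))) • y n) (tendsto_pi_nhds.2 htend)
  have hR₀ : R x₀ ≠ 0 := fun h => hpos.ne' ((htop x₀).1 h)
  exact ⟨⟨Rc, fun hRc => ((htop x₀).2 hR₀).1 (DFunLike.congr_fun hRc x₀), fun _ => rfl⟩, htend⟩

/-- Let `X` be a Fréchet space, `(y n)` a sequence in `X'` whose evaluations all admit finite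
part limits, with coefficients `R x`.  Let `A x` be the largest exponent of the infinite part of
`⟨yₙ, x⟩` (and `0` if the infinite part vanishes). Then `A` attains its maximum at some `x₀`;
moreover, if `α̃ = A x₀ > 0`, then `x ↦ R x α̃` is a nonzero continuous linear functional on
`X`, given by `R x α̃ = lim_n n^{-α̃} ⟨yₙ, x⟩`. -/
theorem top_exponent_attains_max_and_top_coefficient_continuous {𝕜 X : Type*} [RCLike 𝕜]
    [AddCommGroup X] [Module 𝕜 X] [Module ℝ X] [IsScalarTower ℝ 𝕜 X]
    [UniformSpace X] [IsUniformAddGroup X] [ContinuousSMul 𝕜 X] [CompleteSpace X]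
    [TopologicalSpace.MetrizableSpace X] [LocallyConvexSpace ℝ X]
    (y : ℕ → X →L[𝕜] 𝕜) (R : X → ℝ →₀ 𝕜) (z : X → ℕ → 𝕜)
    (hdec : ∀ x : X, ∃ Yx : 𝕜, FPDecomp (fun n => y n x) (R x) (z x) Yx)
    (A : X → ℝ)
    (hA : ∀ x : X, (R x = 0 → A x = 0) ∧
      (R x ≠ 0 → R x (A x) ≠ 0 ∧ ∀ α ∈ (R x).support, α ≤ A x)) :
    ∃ x₀ : X, (∀ x : X, A x ≤ A x₀) ∧
      (0 < A x₀ →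
        (∃ Rc : X →L[𝕜] 𝕜, Rc ≠ 0 ∧ ∀ x : X, Rc x = R x (A x₀)) ∧
        ∀ x : X, Tendsto (fun n : ℕ => ((n : ℝ) ^ (-(A x₀))) • y n x)
          atTop (nhds (R x (A x₀)))) :=
  top_exponent_attains_max_and_top_coefficient_continuous_general y R z hdec A hA
end

section
/- Let $X$ be a Fréchet space and $(y_n)$ a sequence in $X'$ such that for each $x \in X$ the finite part limit of $\langle y_n, x\rangle$ exists. Then the set of exponents $\bigcup_{x\in X}\{\alpha > 0 : R_{\alpha}(x) \ne 0\}$ is finite. -/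
open Filter

/-!
Let `G` be a finite set of exponents whose coefficient maps `x ↦ R x γ` are known to be continuous
linear functionals, and put `wₙ = yₙ - ∑_{γ ∈ G} n^γ R_γ`. The sets `{x | ‖wₙ x‖ ≤ k n^q ∀ n}` are
closed, so by the Baire category theorem the exponents outside `G` have a largest element `β`:
otherwise `X` would be a countable union of such sets with rational `q` below some exponent, one
of them would have interior, and by linearity `wₙ x = O(n^q)` for every `x`, ruling out the
exponents above `q`. Then `R x β = lim n^{-β} wₙ x` is a pointwise limit of continuous functionals
on a barrelled space, hence continuous by Banach–Steinhaus. Infinitely many exponents would thus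
give infinitely many nonzero continuous functionals `R_β`; their kernels are closed with empty
interior, so by Baire some `x` has `R x β ≠ 0` for all of them, contradicting the finiteness of
the support of `R x`.
-/

open Set Topology

theorem tendsto_natCast_rpow_sub_of_le {α β : ℝ} (h : α ≤ β) :
    Tendsto (fun n : ℕ => (n : ℝ) ^ (α - β)) atTop (𝓝 (if α = β then 1 else 0)) := by
  split_ifs with hαβ
  · simp [hαβ]
  · have := tendsto_rpow_neg_atTop (sub_pos.2 (lt_of_le_of_ne h hαβ))
    rw [neg_sub] at this
    exact this.comp tendsto_natCast_atTop_atTop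

namespace FPDecomp

variable {𝕜 : Type*} [RCLike 𝕜] {a : ℕ → 𝕜} {c : ℝ →₀ 𝕜} {z : ℕ → 𝕜} {Y : 𝕜}

theorem tendsto_rpow_inv_smul (h : FPDecomp a c z Y) {β : ℝ} (hβ : 0 < β)
    (hle : ∀ α ∈ c.support, α ≤ β) :
    Tendsto (fun n : ℕ => ((n : ℝ) ^ β)⁻¹ • a n) atTop (𝓝 (c β)) := by
  have hpow : Tendsto (fun n : ℕ => ∑ α ∈ c.support, (n : ℝ) ^ (α - β) • c α) atTop
      (𝓝 (∑ α ∈ c.support, (if α = β then (1 : ℝ) else 0) • c α)) :=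
    tendsto_finsetSum _ fun α hα => (tendsto_natCast_rpow_sub_of_le (hle α hα)).smul_const _
  have hz : Tendsto (fun n : ℕ => ((n : ℝ) ^ β)⁻¹ • z n) atTop (𝓝 ((0 : ℝ) • Y)) :=
    ((tendsto_rpow_atTop hβ).comp tendsto_natCast_atTop_atTop).inv_tendsto_atTop.smul h.2.2
  have hlim : ∑ α ∈ c.support, (if α = β then (1 : ℝ) else 0) • c α + (0 : ℝ) • Y = c β := by
    simp only [ite_smul, one_smul, zero_smul, Finset.sum_ite_eq', Finsupp.mem_support_iff,
      add_zero, ite_not, ite_eq_right_iff]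
    exact fun h => h.symm
  rw [← hlim]
  refine (hpow.add hz).congr' ?_
  filter_upwards [eventually_gt_atTop 0] with n hn
  have hn : (0 : ℝ) < n := Nat.cast_pos.2 hn
  simp only [h.2.1 n, smul_add, Finset.smul_sum, smul_smul, Real.rpow_sub hn, div_eq_inv_mul]

theorem le_of_bddAbove (h : FPDecomp a c z Y) {q : ℝ}
    (hbdd : BddAbove (range fun n : ℕ => ‖((n : ℝ) ^ q)⁻¹ • a n‖)) {α : ℝ}
    (hα : α ∈ c.support) : α ≤ q := by
  set β := c.support.max' ⟨α, hα⟩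
  have hβ : β ∈ c.support := c.support.max'_mem _
  suffices β ≤ q from (c.support.le_max' α hα).trans this
  by_contra! hqβ
  have hzero : Tendsto (fun n : ℕ => ((n : ℝ) ^ β)⁻¹ • a n) atTop (𝓝 0) := by
    have hdecay : Tendsto (fun n : ℕ => (n : ℝ) ^ (q - β)) atTop (𝓝 0) := by
      simpa [hqβ.ne] using tendsto_natCast_rpow_sub_of_le hqβ.le
    refine (hdecay.zero_smul_isBoundedUnder_le hbdd.isBoundedUnder_of_range).congr' ?_
    filter_upwards [eventually_gt_atTop 0] with n hn
    have hn : (0 : ℝ) < n := Nat.cast_pos.2 hn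
    rw [smul_smul, Real.rpow_sub hn]
    field_simp
  exact Finsupp.mem_support_iff.1 hβ <| tendsto_nhds_unique
    (h.tendsto_rpow_inv_smul (h.1 β hβ) fun α hα => c.support.le_max' α hα) hzero

theorem bddAbove_of_le (h : FPDecomp a c z Y) {q : ℝ} (hq : 0 < q)
    (hle : ∀ α ∈ c.support, α ≤ q) :
    BddAbove (range fun n : ℕ => ‖((n : ℝ) ^ q)⁻¹ • a n‖) :=
  (h.tendsto_rpow_inv_smul hq hle).norm.bddAbove_range

theorem filter_notMem (h : FPDecomp a c z Y) (G : Finset ℝ) :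
    FPDecomp (fun n => a n - ∑ γ ∈ G, ((n : ℝ) ^ γ) • c γ) (c.filter (· ∉ G)) z Y := by
  refine ⟨fun α hα => h.1 α (Finset.mem_filter.1 hα).1, fun n => ?_, h.2.2⟩
  have hG : ∑ γ ∈ G, ((n : ℝ) ^ γ) • c γ = ∑ α ∈ c.support with α ∈ G, ((n : ℝ) ^ α) • c α := by
    refine (Finset.sum_subset (fun α hα => (Finset.mem_filter.1 hα).2) fun α _ hα => ?_).symm
    simp_all
  have hnotMem : ∑ α ∈ (c.filter (· ∉ G)).support, ((n : ℝ) ^ α) • c.filter (· ∉ G) α =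
      ∑ α ∈ c.support with α ∉ G, ((n : ℝ) ^ α) • c α :=
    Finset.sum_congr rfl fun α hα => by
      rw [Finsupp.filter_apply_pos (· ∉ G) c (Finset.mem_filter.1 hα).2]
  show a n - _ = _
  rw [h.2.1 n, hG, hnotMem, ← Finset.sum_filter_add_sum_filter_not c.support (· ∈ G)]
  abel

end FPDecomp

section Baire

variable {𝕜 X F : Type*} [NontriviallyNormedField 𝕜] [AddCommGroup X] [Module 𝕜 X]
  [TopologicalSpace X] [IsTopologicalAddGroup X] [ContinuousSMul 𝕜 X] [BaireSpace X]
  [NormedAddCommGroup F] [NormedSpace 𝕜 F]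

theorem exists_forall_bddAbove_norm {ι : Type*} [Countable ι] (T : ι → ℕ → X →L[𝕜] F)
    (h : ∀ x, ∃ i, BddAbove (range fun n => ‖T i n x‖)) :
    ∃ i, ∀ x, BddAbove (range fun n => ‖T i n x‖) := by
  let K : ι × ℕ → Set X := fun p => {x | ∀ n, ‖T p.1 n x‖ ≤ p.2}
  have hclosed (p : ι × ℕ) : IsClosed (K p) := by
    simp only [K, ofPred_forall]
    exact isClosed_iInter fun n => isClosed_le (T p.1 n).continuous.norm continuous_const
  have hcover : ⋃ p, K p = univ := eq_univ_of_forall fun x => by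
    obtain ⟨i, C, hC⟩ := h x
    obtain ⟨k, hk⟩ := exists_nat_ge C
    exact mem_iUnion.2 ⟨(i, k), fun n => (hC ⟨n, rfl⟩).trans hk⟩
  obtain ⟨⟨i, k⟩, x₀, hx₀⟩ := nonempty_interior_of_iUnion_of_closed hclosed hcover
  refine ⟨i, fun x => ?_⟩
  have hnhds : {v | x₀ + v ∈ K (i, k)} ∈ 𝓝 (0 : X) :=
    (continuous_const_add x₀).continuousAt.preimage_mem_nhds
      (by simpa using mem_interior_iff_mem_nhds.1 hx₀)
  obtain ⟨c, hc⟩ := ((absorbent_nhds_zero (𝕜 := 𝕜) hnhds) x).exists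
  obtain ⟨v, hv, rfl⟩ := Set.mem_smul_set.1 (hc rfl)
  refine ⟨‖c‖ * (2 * k), forall_mem_range.2 fun n => ?_⟩
  have hdiff : T i n v = T i n (x₀ + v) - T i n x₀ := by simp
  rw [map_smul, norm_smul, hdiff]
  gcongr
  linarith [norm_sub_le (T i n (x₀ + v)) (T i n x₀), hv n, interior_subset hx₀ n]

theorem exists_forall_apply_ne_zero {ι : Type*} [Countable ι] (L : ι → X →L[𝕜] F)
    (hL : ∀ i, L i ≠ 0) : ∃ x, ∀ i, L i x ≠ 0 := by
  have hdense (i : ι) : Dense {x | L i x ≠ 0} := by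
    have : interior (LinearMap.ker (L i : X →ₗ[𝕜] F) : Set X) = ∅ := by
      by_contra hne
      have := (LinearMap.ker (L i : X →ₗ[𝕜] F)).eq_top_of_nonempty_interior'
        (nonempty_iff_ne_empty.2 hne)
      exact hL i (ContinuousLinearMap.ext fun x => LinearMap.mem_ker.1 (this ▸ Submodule.mem_top))
    exact interior_eq_empty_iff_dense_compl.1 this
  obtain ⟨x, hx⟩ := (dense_iInter_of_isOpen
    (fun i => isOpen_ne_fun (L i).continuous continuous_const) hdense).nonempty
  exact ⟨x, mem_iInter.1 hx⟩

end Baire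

theorem exists_mem_forall_lt_of_forall_not_isGreatest {α : Type*} [LinearOrder α] {s : Set α}
    (hs : s.Nonempty) (h : ∀ b, ¬IsGreatest s b) {t : Finset α} (ht : ↑t ⊆ s) :
    ∃ a ∈ s, ∀ b ∈ t, b < a := by
  rcases t.eq_empty_or_nonempty with rfl | ht₀
  · obtain ⟨a, ha⟩ := hs
    exact ⟨a, ha, by simp⟩
  · obtain ⟨a, ha, hlt⟩ : ∃ a ∈ s, t.max' ht₀ < a := by
      by_contra! hle
      exact h _ ⟨ht (t.max'_mem ht₀), hle⟩
    exact ⟨a, ha, fun b hb => (t.le_max' b hb).trans_lt hlt⟩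

section Exponents

variable {𝕜 X : Type*} [RCLike 𝕜]

def exponents (R : X → ℝ →₀ 𝕜) : Set ℝ := {α | ∃ x, R x α ≠ 0}

theorem support_subset_exponents (R : X → ℝ →₀ 𝕜) (x : X) :
    ↑(R x).support ⊆ exponents R :=
  fun _ hα => ⟨x, Finsupp.mem_support_iff.1 hα⟩

variable [AddCommGroup X] [Module 𝕜 X] [UniformSpace X]
  {y w : ℕ → X →L[𝕜] 𝕜} {R : X → ℝ →₀ 𝕜} {z : X → ℕ → 𝕜}

theorem pos_of_mem_exponents (h : ∀ x, ∃ Y, FPDecomp (fun n => w n x) (R x) (z x) Y) {α : ℝ}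
    (hα : α ∈ exponents R) : 0 < α := by
  obtain ⟨x, hx⟩ := hα
  exact (h x).choose_spec.1 α (Finsupp.mem_support_iff.2 hx)

variable [IsUniformAddGroup X] [ContinuousSMul 𝕜 X]

theorem exists_isGreatest_exponents [BaireSpace X]
    (h : ∀ x, ∃ Y, FPDecomp (fun n => w n x) (R x) (z x) Y) (hne : (exponents R).Nonempty) :
    ∃ β, IsGreatest (exponents R) β := by
  by_contra! hmax
  have hbelow (x : X) : ∃ q : ℚ, 0 < q ∧ (∀ α ∈ (R x).support, α ≤ q) ∧
      ∃ α ∈ exponents R, (q : ℝ) < α := by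
    obtain ⟨α, hα, hlt⟩ := exists_mem_forall_lt_of_forall_not_isGreatest hne hmax
      (support_subset_exponents R x)
    have hm : (insert 0 (R x).support).max' (Finset.insert_nonempty _ _) < α :=
      (Finset.max'_lt_iff _ _).2 (Finset.forall_mem_insert _ _ _ |>.2
        ⟨pos_of_mem_exponents h hα, hlt⟩)
    obtain ⟨q, hmq, hqα⟩ := exists_rat_btwn hm
    refine ⟨q, ?_, fun γ hγ => ?_, α, hα, hqα⟩
    · exact_mod_cast (Finset.le_max' _ 0 (Finset.mem_insert_self _ _)).trans_lt hmq
    · exact ((Finset.le_max' _ γ (Finset.mem_insert_of_mem hγ)).trans_lt hmq).le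
  let ι := {q : ℚ // 0 < q ∧ ∃ α ∈ exponents R, (q : ℝ) < α}
  obtain ⟨q, hbdd⟩ := exists_forall_bddAbove_norm
    (fun (q : ι) (n : ℕ) => ((n : ℝ) ^ (q.1 : ℝ))⁻¹ • w n) fun x => by
      obtain ⟨q, hq, hle, hqE⟩ := hbelow x
      exact ⟨⟨q, hq, hqE⟩, (h x).choose_spec.bddAbove_of_le (by exact_mod_cast hq) hle⟩
  obtain ⟨α, ⟨x, hx⟩, hqα⟩ := q.2.2
  exact hqα.not_ge ((h x).choose_spec.le_of_bddAbove (hbdd x) (Finsupp.mem_support_iff.2 hx))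

theorem exists_clm_apply_eq_of_isGreatest [BarrelledSpace 𝕜 X]
    (h : ∀ x, ∃ Y, FPDecomp (fun n => w n x) (R x) (z x) Y) {β : ℝ}
    (hβ : IsGreatest (exponents R) β) : ∃ L : X →L[𝕜] 𝕜, ∀ x, L x = R x β := by
  have hlim : Tendsto (fun (n : ℕ) x => (((n : ℝ) ^ β)⁻¹ • w n) x) atTop (𝓝 fun x => R x β) :=
    tendsto_pi_nhds.2 fun x => (h x).choose_spec.tendsto_rpow_inv_smul
      (pos_of_mem_exponents h hβ.1) fun α hα => hβ.2 (support_subset_exponents R x hα)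
  exact ⟨continuousLinearMapOfTendsto _ hlim, fun x => rfl⟩

variable [BaireSpace X]

theorem exists_clm_apply_eq_of_not_subset
    (h : ∀ x, ∃ Y, FPDecomp (fun n => y n x) (R x) (z x) Y) (G : Finset ℝ)
    (hG : ∀ γ ∈ G, ∃ L : X →L[𝕜] 𝕜, ∀ x, L x = R x γ) (hnot : ¬exponents R ⊆ G) :
    ∃ β ∈ exponents R, β ∉ G ∧ ∃ L : X →L[𝕜] 𝕜, ∀ x, L x = R x β := by
  choose! L hL using hG
  have h' (x : X) : ∃ Y, FPDecomp (fun n => (y n - ∑ γ ∈ G, ((n : ℝ) ^ γ) • L γ) x)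
      ((R x).filter (· ∉ G)) (z x) Y := by
    obtain ⟨Y, hY⟩ := h x
    refine ⟨Y, ?_⟩
    convert hY.filter_notMem G using 2 with n
    simp only [sub_apply, sum_apply, smul_apply]
    rw [Finset.sum_congr rfl fun γ hγ => by rw [hL γ hγ x]]
  have hexp : exponents (fun x => (R x).filter (· ∉ G)) = exponents R \ G := by
    ext α
    by_cases hα : α ∈ G <;> simp [exponents, Finsupp.filter_apply, hα]
  obtain ⟨α, hα, hαG⟩ := not_subset.1 hnot
  obtain ⟨β, hβ⟩ := exists_isGreatest_exponents h' (hexp ▸ ⟨α, hα, hαG⟩)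
  obtain ⟨L', hL'⟩ := exists_clm_apply_eq_of_isGreatest h' hβ
  obtain ⟨hβR, hβG⟩ : β ∈ exponents R \ G := hexp ▸ hβ.1
  exact ⟨β, hβR, hβG, L', fun x => by rw [hL' x, Finsupp.filter_apply_pos (· ∉ G) (R x) hβG]⟩

theorem infinite_setOf_exists_clm_apply_eq
    (h : ∀ x, ∃ Y, FPDecomp (fun n => y n x) (R x) (z x) Y) (hinf : (exponents R).Infinite) :
    {β ∈ exponents R | ∃ L : X →L[𝕜] 𝕜, ∀ x, L x = R x β}.Infinite := fun hfin => by
  obtain ⟨β, hβ, hβG, L, hL⟩ := exists_clm_apply_eq_of_not_subset h hfin.toFinset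
    (fun γ hγ => (hfin.mem_toFinset.1 hγ).2)
    fun hsub => hinf (hfin.subset fun α hα => hfin.mem_toFinset.1 (hsub hα))
  exact hβG (hfin.mem_toFinset.2 ⟨hβ, L, hL⟩)

end Exponents

theorem exponent_set_finite_general {𝕜 X : Type*} [RCLike 𝕜] [AddCommGroup X]
    [Module 𝕜 X] [UniformSpace X] [IsUniformAddGroup X]
    [ContinuousSMul 𝕜 X] [CompleteSpace X] [TopologicalSpace.MetrizableSpace X]
    (y : ℕ → X →L[𝕜] 𝕜) (R : X → ℝ →₀ 𝕜) (z : X → ℕ → 𝕜)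
    (h : ∀ x : X, ∃ Yx : 𝕜, FPDecomp (fun n => y n x) (R x) (z x) Yx) :
    {α : ℝ | ∃ x : X, R x α ≠ 0}.Finite := by
  -- A countably generated complete uniformity makes `X` a Baire space.
  have := IsUniformAddGroup.uniformity_countably_generated (α := X)
  by_contra hinf
  set e := (infinite_setOf_exists_clm_apply_eq h hinf).natEmbedding
  choose L hL using fun i => (e i).2.2
  obtain ⟨x, hx⟩ := exists_forall_apply_ne_zero L fun i hLi => by
    obtain ⟨x, hx⟩ := (e i).2.1
    exact hx (by rw [← hL i x, hLi, zero_apply])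
  have hrange : range (fun i => (e i : ℝ)) ⊆ (R x).support := by
    rintro _ ⟨i, rfl⟩
    exact Finsupp.mem_support_iff.2 (hL i x ▸ hx i)
  exact (infinite_range_of_injective (Subtype.val_injective.comp e.injective)).mono hrange
    (R x).support.finite_toSet

/-- In a Fréchet space, if the finite part limit of `⟨yₙ, x⟩` exists for every `x`, then the
total set of exponents `⋃ₓ {α > 0 : R_α(x) ≠ 0}` appearing in the infinite parts is finite. -/
theorem exponent_set_finite {𝕜 X : Type*} [RCLike 𝕜] [AddCommGroup X]
    [Module 𝕜 X] [Module ℝ X] [IsScalarTower ℝ 𝕜 X] [UniformSpace X] [IsUniformAddGroup X]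
    [ContinuousSMul 𝕜 X] [CompleteSpace X] [TopologicalSpace.MetrizableSpace X]
    [LocallyConvexSpace ℝ X]
    (y : ℕ → X →L[𝕜] 𝕜) (R : X → ℝ →₀ 𝕜) (z : X → ℕ → 𝕜)
    (h : ∀ x : X, ∃ Yx : 𝕜, FPDecomp (fun n => y n x) (R x) (z x) Yx) :
    {α : ℝ | ∃ x : X, R x α ≠ 0}.Finite :=
  exponent_set_finite_general y R z h
end

section
/- Let $X$ be a locally convex space carrying the final locally convex topology induced by a family of linear maps $u_i : X_i \to X$ from Fréchet spaces $X_i$ (in particular, $X$ may be an inductive limit of Fréchet spaces, such as an LF-space). Let $(y_n)$ be a sequence in $X'$ such that for each $x \in X$ the finite part limit $Y(x) = \mathrm{F.p.}\lim_{n\to\infty} \langle y_n, x\rangle$ exists. Then $Y \in X'$, and each coefficient functional $R_{\alpha}$ is continuous. -/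
open Filter

/-!
Finite-part decompositions are unique: multiplying a power sum with top exponent `β` by `n ^ (-β)`
isolates its top coefficient, while it sends bounded sequences to `0`. Hence `Y` and every `R_α`
are linear in `x`, and by the characterization of the final topology it suffices to prove their
continuity on a single Fréchet space. There, Baire's theorem bounds the number of exponents of each
`R x`, linearity puts all of them into one finite set, and the coefficients are then peeled off
from the largest exponent down, each being a pointwise limit of continuous functionals and hence
continuous by Banach–Steinhaus.
-/

open Asymptotics Topology

namespace FinitePart

variable {K : Type*} [RCLike K]

noncomputable def powerSum (x : ℝ) : (ℝ →₀ K) →ₗ[K] K :=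
  Finsupp.linearCombination K fun α => ((x ^ α : ℝ) : K)

theorem powerSum_apply (x : ℝ) (r : ℝ →₀ K) :
    powerSum x r = ∑ α ∈ r.support, x ^ α • r α := by
  simp only [powerSum, Finsupp.linearCombination_apply, Finsupp.sum, smul_eq_mul,
    RCLike.real_smul_eq_coe_mul, mul_comm]

theorem powerSum_single (x α : ℝ) (a : K) : powerSum x (Finsupp.single α a) = x ^ α • a := by
  rw [powerSum, Finsupp.linearCombination_single, smul_eq_mul, RCLike.real_smul_eq_coe_mul,
    mul_comm]

theorem powerSum_erase (x α : ℝ) (r : ℝ →₀ K) :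
    powerSum x (r.erase α) = powerSum x r - x ^ α • r α := by
  have := congrArg (powerSum x) (Finsupp.single_add_erase α r)
  rw [map_add, powerSum_single] at this
  rw [← this, add_sub_cancel_left]

theorem tendsto_natCast_rpow_of_neg {γ : ℝ} (hγ : γ < 0) :
    Tendsto (fun n : ℕ => (n : ℝ) ^ γ) atTop (𝓝 0) := by
  simpa [Function.comp_def] using
    (tendsto_rpow_neg_atTop (neg_pos.2 hγ)).comp tendsto_natCast_atTop_atTop

theorem tendsto_rpow_neg_smul_powerSum {r : ℝ →₀ K} {β : ℝ} (hr : ∀ α ∈ r.support, α ≤ β) :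
    Tendsto (fun n : ℕ => (n : ℝ) ^ (-β) • powerSum n r) atTop (𝓝 (r β)) := by
  classical
  have hterm : ∀ α ∈ r.support, Tendsto (fun n : ℕ => (n : ℝ) ^ (α - β) • r α) atTop
      (𝓝 (if α = β then r α else 0)) := fun α hα => by
    rcases (hr α hα).lt_or_eq with hlt | rfl
    · simpa [hlt.ne] using (tendsto_natCast_rpow_of_neg (sub_neg.2 hlt)).smul_const (r α)
    · simp
  have hsum := tendsto_finsetSum _ hterm
  rw [Finset.sum_ite_eq', ite_eq_left_iff.2 fun h => (Finsupp.notMem_support_iff.1 h).symm] at hsum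
  refine hsum.congr' ((eventually_gt_atTop 0).mono fun n hn => ?_)
  have hn : (0 : ℝ) < n := Nat.cast_pos.2 hn
  simp only [powerSum_apply, Finset.smul_sum, smul_smul, ← Real.rpow_add hn, sub_eq_neg_add]

theorem eq_zero_of_isBigO_powerSum {d : ℝ →₀ K}
    (hd : (fun n : ℕ => powerSum n d) =O[atTop] (fun _ => (1 : ℝ))) {α : ℝ} (hα : 0 < α) :
    d α = 0 := by
  by_contra hdα
  have hne : d.support.Nonempty := ⟨α, Finsupp.mem_support_iff.2 hdα⟩
  set β := d.support.max' hne
  have hβ : 0 < β := hα.trans_le (d.support.le_max' α (Finsupp.mem_support_iff.2 hdα))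
  have hzero : Tendsto (fun n : ℕ => (n : ℝ) ^ (-β) • powerSum n d) atTop (𝓝 0) := by
    refine ((isBigO_refl (fun n : ℕ => (n : ℝ) ^ (-β)) atTop).smul hd).trans_tendsto ?_
    simpa using tendsto_natCast_rpow_of_neg (neg_neg_of_pos hβ)
  exact Finsupp.mem_support_iff.1 (d.support.max'_mem hne) <| tendsto_nhds_unique
    (tendsto_rpow_neg_smul_powerSum fun γ hγ => d.support.le_max' γ hγ) hzero

theorem support_subset_of_isBigO_sub {r r' : ℝ →₀ K} (hr : ∀ α ∈ r.support, 0 < α)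
    (h : (fun n : ℕ => powerSum n r - powerSum n r') =O[atTop] (fun _ => (1 : ℝ))) :
    r.support ⊆ r'.support := by
  intro α hα
  have := eq_zero_of_isBigO_powerSum (d := r - r') (by simpa only [map_sub] using h) (hr α hα)
  rw [Finsupp.mem_support_iff, ← sub_eq_zero.1 this]
  exact Finsupp.mem_support_iff.1 hα

section Pairs

variable {k : ℕ}

/-- Power sums with at most `k` terms, parametrized by `Fin k → ℝ × K` so that families with bounded
exponents and coefficients form a compact set. -/
noncomputable def ofPairs (p : Fin k → ℝ × K) : ℝ →₀ K :=
  ∑ j, Finsupp.single (p j).1 (p j).2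

theorem powerSum_ofPairs (x : ℝ) (p : Fin k → ℝ × K) :
    powerSum x (ofPairs p) = ∑ j, x ^ (p j).1 • (p j).2 := by
  simp only [ofPairs, map_sum, powerSum_single]

theorem card_support_ofPairs_le (p : Fin k → ℝ × K) : (ofPairs p).support.card ≤ k := by
  classical
  calc (ofPairs p).support.card ≤ (Finset.univ.image fun j => (p j).1).card := by
        refine Finset.card_le_card (Finsupp.support_finsetSum.trans ?_)
        simp only [Finset.biUnion_subset]
        exact fun j _ => (Finsupp.support_single_subset).trans
          (Finset.singleton_subset_iff.2 (Finset.mem_image_of_mem _ (Finset.mem_univ j)))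
    _ ≤ k := Finset.card_image_le.trans_eq (Finset.card_fin k)

theorem continuous_powerSum_ofPairs {x : ℝ} (hx : 0 < x) :
    Continuous fun p : Fin k → ℝ × K => powerSum x (ofPairs p) := by
  simp only [powerSum_ofPairs]
  exact continuous_finsetSum _ fun j _ =>
    ((Real.continuous_const_rpow hx.ne').comp (continuous_fst.comp (continuous_apply j))).smul
      (continuous_snd.comp (continuous_apply j))

theorem exists_ofPairs_eq {r : ℝ →₀ K} (hr : r.support.card ≤ k) {S : Set (ℝ × K)} (h0 : 0 ∈ S)
    (hS : ∀ α ∈ r.support, (α, r α) ∈ S) : ∃ p : Fin k → ℝ × K, (∀ j, p j ∈ S) ∧ ofPairs p = r := by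
  classical
  let e : r.support ↪ Fin k := r.support.equivFin.toEmbedding.trans (Fin.castLEEmb hr)
  let q : r.support → ℝ × K := fun α => (α, r α)
  refine ⟨Function.extend e q 0, fun j => ?_, ?_⟩
  · by_cases hj : ∃ α, e α = j
    · obtain ⟨α, rfl⟩ := hj
      rw [e.injective.extend_apply]
      exact hS α α.2
    · rwa [Function.extend_apply' _ _ _ hj]
  · rw [ofPairs, ← Fintype.sum_of_injective e e.injective (fun α => Finsupp.single α.1 (r α))
      _ (fun j hj => by rw [Function.extend_apply' _ _ _ hj]; simp)
      (fun α => by rw [e.injective.extend_apply])]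
    rw [Finset.sum_coe_sort r.support fun α => Finsupp.single α (r α)]
    exact r.sum_single

end Pairs

end FinitePart

namespace Finsupp

variable {ι K : Type*} [Field K] [Infinite K]

theorem exists_support_union_subset_support_add_smul [DecidableEq ι] (a b : ι →₀ K) :
    ∃ t : K, a.support ∪ b.support ⊆ (a + t • b).support := by
  classical
  obtain ⟨t, ht⟩ :=
    Infinite.exists_notMem_finset ((a.support ∪ b.support).image fun i => -a i / b i)
  refine ⟨t, fun i hi => mem_support_iff.2 ?_⟩
  rw [add_apply, smul_apply, smul_eq_mul]
  by_cases hb : b i = 0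
  · rw [hb, mul_zero, add_zero]
    rcases Finset.mem_union.1 hi with hi | hi
    exacts [mem_support_iff.1 hi, absurd hb (mem_support_iff.1 hi)]
  · intro hsum
    refine ht (Finset.mem_image.2 ⟨i, hi, ?_⟩)
    rw [div_eq_iff hb]
    linear_combination -hsum

/-- A support of maximal size contains every other support `(c x).support`: otherwise the support
of `c (x₀ + t • x)` would be larger for a suitable `t`. -/
theorem exists_support_subset_of_card_le {M : Type*} [AddCommGroup M] [Module K M]
    (c : M →ₗ[K] ι →₀ K) {m : ℕ} (hc : ∀ x, (c x).support.card ≤ m) :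
    ∃ x₀, ∀ x, (c x).support ⊆ (c x₀).support := by
  classical
  have hbdd : BddAbove (Set.range fun x => (c x).support.card) :=
    ⟨m, Set.forall_mem_range.2 hc⟩
  obtain ⟨x₀, hx₀⟩ := Nat.sSup_mem (Set.range_nonempty fun x => (c x).support.card) hbdd
  refine ⟨x₀, fun x => ?_⟩
  obtain ⟨t, ht⟩ := exists_support_union_subset_support_add_smul (c x₀) (c x)
  rw [← map_smul, ← map_add] at ht
  have hcard : ((c x₀).support ∪ (c x).support).card ≤ (c x₀).support.card :=
    (Finset.card_le_card ht).trans ((le_csSup hbdd (Set.mem_range_self _)).trans_eq hx₀.symm)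
  rw [Finset.eq_of_subset_of_card_le Finset.subset_union_left hcard]
  exact Finset.subset_union_right

end Finsupp

theorem IsCompact.isClosed_setOf_exists_mem {X P : Type*} [TopologicalSpace X]
    [TopologicalSpace P] {S : Set P} (hS : IsCompact S) {T : Set (X × P)} (hT : IsClosed T) :
    IsClosed {x | ∃ p ∈ S, (x, p) ∈ T} := by
  have := isCompact_iff_compactSpace.1 hS
  have hpre : IsClosed {q : X × S | (q.1, (q.2 : P)) ∈ T} :=
    hT.preimage (continuous_fst.prodMk (continuous_subtype_val.comp continuous_snd))
  convert isClosedMap_fst_of_compactSpace _ hpre using 1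
  ext x
  simp

namespace FPDecomp

open FinitePart

section Linear

variable {K : Type*} [RCLike K] {a a' : ℕ → K} {R R' : ℝ →₀ K} {z z' : ℕ → K} {Y Y' : K}

theorem iff_powerSum : FPDecomp a R z Y ↔
    (∀ α ∈ R.support, 0 < α) ∧ (∀ n : ℕ, a n = powerSum n R + z n) ∧ Tendsto z atTop (𝓝 Y) := by
  simp only [FPDecomp, powerSum_apply]

theorem apply_eq (h : FPDecomp a R z Y) (n : ℕ) : a n = powerSum n R + z n :=
  (iff_powerSum.1 h).2.1 n

theorem unique (h : FPDecomp a R z Y) (h' : FPDecomp a R' z' Y') : R = R' ∧ Y = Y' := by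
  have hdiff : ∀ n : ℕ, powerSum n (R - R') = z' n - z n := fun n => by
    have := (h.apply_eq n).symm.trans (h'.apply_eq n)
    rw [map_sub]
    linear_combination this
  have hRR' : R = R' := by
    ext α
    by_cases hα : 0 < α
    · rw [← sub_eq_zero, ← Finsupp.sub_apply]
      refine eq_zero_of_isBigO_powerSum ?_ hα
      simpa only [hdiff] using (h'.2.2.sub h.2.2).isBigO_one ℝ
    · rw [Finsupp.notMem_support_iff.1 fun hR => hα (h.1 α hR),
        Finsupp.notMem_support_iff.1 fun hR => hα (h'.1 α hR)]
  subst hRR'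
  have hzz' : z = z' := funext fun n => by
    have := hdiff n
    rw [sub_self, map_zero] at this
    linear_combination this
  subst hzz'
  exact ⟨rfl, tendsto_nhds_unique h.2.2 h'.2.2⟩

theorem add (h : FPDecomp a R z Y) (h' : FPDecomp a' R' z' Y') :
    FPDecomp (a + a') (R + R') (z + z') (Y + Y') := by
  refine iff_powerSum.2 ⟨fun α hα => ?_, fun n => ?_, h.2.2.add h'.2.2⟩
  · rcases Finset.mem_union.1 (Finsupp.support_add hα) with hα | hα
    exacts [h.1 α hα, h'.1 α hα]
  · rw [map_add, Pi.add_apply, h.apply_eq, h'.apply_eq, Pi.add_apply]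
    ring

theorem smul (h : FPDecomp a R z Y) (c : K) : FPDecomp (c • a) (c • R) (c • z) (c • Y) := by
  refine iff_powerSum.2 ⟨fun α hα => h.1 α (Finsupp.support_smul hα), fun n => ?_,
    h.2.2.const_smul c⟩
  rw [map_smul, Pi.smul_apply, h.apply_eq, Pi.smul_apply, smul_add]

theorem isLinearMap {E : Type*} [AddCommGroup E] [Module K E] (f : ℕ → E →ₗ[K] K)
    {c : E → ℝ →₀ K} {w : E → ℕ → K} {L : E → K}
    (hf : ∀ ξ, FPDecomp (fun n => f n ξ) (c ξ) (w ξ) (L ξ)) :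
    IsLinearMap K c ∧ IsLinearMap K L := by
  have hadd : ∀ ξ η, c (ξ + η) = c ξ + c η ∧ L (ξ + η) = L ξ + L η := fun ξ η =>
    (hf (ξ + η)).unique (by simpa only [map_add, Pi.add_def] using (hf ξ).add (hf η))
  have hsmul : ∀ (t : K) ξ, c (t • ξ) = t • c ξ ∧ L (t • ξ) = t • L ξ := fun t ξ =>
    (hf (t • ξ)).unique (by simpa only [map_smul, Pi.smul_def] using (hf ξ).smul t)
  exact ⟨⟨fun ξ η => (hadd ξ η).1, fun t ξ => (hsmul t ξ).1⟩,
    ⟨fun ξ η => (hadd ξ η).2, fun t ξ => (hsmul t ξ).2⟩⟩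

end Linear

variable {K : Type*} [RCLike K] {E : Type*} [AddCommGroup E] [Module K E]

section Barrelled

variable [UniformSpace E] [IsUniformAddGroup E] [ContinuousSMul K E] [BarrelledSpace K E]

/-- Induction on the largest exponent `a`: `n ^ (-a) • f n` converges pointwise to the coefficient
of `a`, which is therefore continuous by Banach–Steinhaus, and subtracting `n ^ a` times it removes
`a` from all supports. -/
theorem continuous_of_support_subset (Γ : Finset ℝ) (hΓ : ∀ α ∈ Γ, 0 < α)
    (f : ℕ → E →L[K] K) {c : E → ℝ →₀ K} {w : E → ℕ → K} {L : E → K}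
    (hc : ∀ ξ, (c ξ).support ⊆ Γ) (hf : ∀ ξ, FPDecomp (fun n => f n ξ) (c ξ) (w ξ) (L ξ)) :
    Continuous L ∧ ∀ α, Continuous fun ξ => c ξ α := by
  classical
  induction Γ using Finset.induction_on_max generalizing f c with
  | empty =>
    have hc0 : ∀ ξ, c ξ = 0 := fun ξ => Finsupp.support_eq_empty.1 (Finset.subset_empty.1 (hc ξ))
    have hlim : Tendsto (fun n ξ => f n ξ) atTop (𝓝 L) := tendsto_pi_nhds.2 fun ξ => by
      simpa [(hf ξ).apply_eq, hc0] using (hf ξ).2.2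
    exact ⟨(continuousLinearMapOfTendsto f hlim).continuous, fun α => by
      simpa [hc0] using continuous_const⟩
  | insert a s hs ih =>
    have ha : 0 < a := hΓ a (Finset.mem_insert_self a s)
    have hlim : Tendsto (fun (n : ℕ) ξ => ((n : ℝ) ^ (-a) • f n) ξ) atTop (𝓝 fun ξ => c ξ a) :=
      tendsto_pi_nhds.2 fun ξ => by
        have hle : ∀ α ∈ (c ξ).support, α ≤ a := fun α hα => by
          rcases Finset.mem_insert.1 (hc ξ hα) with rfl | hα
          exacts [le_rfl, (hs α hα).le]
        have := (tendsto_rpow_neg_smul_powerSum hle).add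
          ((tendsto_natCast_rpow_of_neg (neg_neg_of_pos ha)).smul (hf ξ).2.2)
        simpa [(hf ξ).apply_eq, smul_add] using this
    set G := continuousLinearMapOfTendsto _ hlim
    have hG : ∀ ξ, G ξ = c ξ a := fun ξ => rfl
    have hrest : ∀ ξ, FPDecomp (fun n => (f n - (n : ℝ) ^ a • G) ξ) ((c ξ).erase a) (w ξ)
        (L ξ) := by
      refine fun ξ => iff_powerSum.2 ⟨fun α hα => (hf ξ).1 α ?_, fun n => ?_, (hf ξ).2.2⟩
      · rw [Finsupp.support_erase] at hα
        exact Finset.mem_of_mem_erase hα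
      · rw [sub_apply, smul_apply, (hf ξ).apply_eq n, hG, powerSum_erase]
        ring
    obtain ⟨hL, hcoeff⟩ := ih (fun α hα => hΓ α (Finset.mem_insert_of_mem hα)) _
      (fun ξ => by rw [Finsupp.support_erase]; exact Finset.subset_insert_iff.1 (hc ξ)) hrest
    refine ⟨hL, fun α => ?_⟩
    rcases eq_or_ne α a with rfl | hα
    · exact G.continuous
    · simpa [Finsupp.erase_ne hα] using hcoeff α

end Barrelled

section Baire

variable [TopologicalSpace E]

/-- `n = 0` is left out because `p ↦ 0 ^ p` is discontinuous at `p = 0`, and these sets are meant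
to be closed. -/
def approxSet (f : ℕ → E →L[K] K) (k : ℕ) : Set E :=
  {ξ | ∃ p ∈ Set.univ.pi fun _ : Fin k => Set.Icc (0 : ℝ) k ×ˢ Metric.closedBall (0 : K) k,
    ∀ n : ℕ, 0 < n → ‖f n ξ - powerSum n (ofPairs p)‖ ≤ k}

theorem isClosed_approxSet (f : ℕ → E →L[K] K) (k : ℕ) : IsClosed (approxSet f k) := by
  have hbox : IsCompact
      (Set.univ.pi fun _ : Fin k => Set.Icc (0 : ℝ) k ×ˢ Metric.closedBall (0 : K) k) :=
    isCompact_univ_pi fun _ => isCompact_Icc.prod (isCompact_closedBall _ _)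
  refine hbox.isClosed_setOf_exists_mem
    (T := {q | ∀ n : ℕ, 0 < n → ‖f n q.1 - powerSum n (ofPairs q.2)‖ ≤ k}) ?_
  simp only [Set.ofPred_forall]
  exact isClosed_iInter fun n => isClosed_iInter fun hn => isClosed_le
    (((f n).continuous.comp continuous_fst).sub
      ((continuous_powerSum_ofPairs (Nat.cast_pos.2 hn)).comp continuous_snd)).norm
    continuous_const

theorem eventually_mem_approxSet {f : ℕ → E →L[K] K} {ξ : E} {r : ℝ →₀ K} {w : ℕ → K} {L : K}
    (hf : FPDecomp (fun n => f n ξ) r w L) : ∀ᶠ k in atTop, ξ ∈ approxSet f k := by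
  obtain ⟨C, hC⟩ := hf.2.2.norm.bddAbove_range
  have hcard : ∀ᶠ k : ℕ in atTop, r.support.card ≤ k := eventually_ge_atTop _
  have hcoeff : ∀ᶠ k : ℕ in atTop, ∀ α ∈ r.support, α ≤ k ∧ ‖r α‖ ≤ k :=
    (eventually_all_finset _).2 fun α _ =>
      (tendsto_natCast_atTop_atTop.eventually_ge_atTop α).and
        (tendsto_natCast_atTop_atTop.eventually_ge_atTop ‖r α‖)
  have hrem : ∀ᶠ k : ℕ in atTop, C ≤ k := tendsto_natCast_atTop_atTop.eventually_ge_atTop C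
  filter_upwards [hcard, hcoeff, hrem] with k hk hkr hkC
  obtain ⟨p, hpS, hp⟩ := exists_ofPairs_eq hk
    (S := Set.Icc (0 : ℝ) k ×ˢ Metric.closedBall (0 : K) k) (by simp)
    fun α hα => ⟨⟨(hf.1 α hα).le, (hkr α hα).1⟩, by simpa using (hkr α hα).2⟩
  refine ⟨p, fun j _ => hpS j, fun n _ => ?_⟩
  rw [hf.apply_eq, hp, add_sub_cancel_left]
  exact (hC (Set.mem_range_self n)).trans hkC

/-- By Baire, some `approxSet f k` has an interior point `x₀`; every `ξ` is a difference quotient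
of `x₀` and a point `x₀ + t • ξ` of that set, so `c ξ` has at most `2 k` exponents. -/
theorem exists_card_support_le [ContinuousAdd E] [ContinuousSMul K E] [BaireSpace E]
    (f : ℕ → E →L[K] K) {c : E → ℝ →₀ K} {w : E → ℕ → K} {L : E → K}
    (hf : ∀ ξ, FPDecomp (fun n => f n ξ) (c ξ) (w ξ) (L ξ)) :
    ∃ m, ∀ ξ, (c ξ).support.card ≤ m := by
  classical
  obtain ⟨k, x₀, hx₀⟩ := nonempty_interior_of_iUnion_of_closed (isClosed_approxSet f)
    (Set.iUnion_eq_univ_iff.2 fun ξ => (eventually_mem_approxSet (hf ξ)).exists)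
  refine ⟨k + k, fun ξ => ?_⟩
  have hline : ∀ᶠ t : K in 𝓝 0, x₀ + t • ξ ∈ approxSet f k :=
    ((continuous_const.add (continuous_id.smul continuous_const)).tendsto' 0 x₀
      (by simp)).eventually (mem_interior_iff_mem_nhds.1 hx₀)
  obtain ⟨t, ht, ht0 : t ≠ 0⟩ := ((hline.filter_mono nhdsWithin_le_nhds).and
    (self_mem_nhdsWithin : {(0 : K)}ᶜ ∈ 𝓝[≠] 0)).exists
  obtain ⟨p₁, -, hp₁⟩ := ht
  obtain ⟨p₀, -, hp₀⟩ := interior_subset hx₀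
  have hbdd : (fun n : ℕ => t⁻¹ • ((f n (x₀ + t • ξ) - powerSum n (ofPairs p₁)) -
      (f n x₀ - powerSum n (ofPairs p₀)))) =O[atTop] (fun _ => (1 : ℝ)) :=
    IsBigO.of_bound (‖t⁻¹‖ * (k + k)) ((eventually_gt_atTop 0).mono fun n hn => by
      simpa [norm_smul] using
        mul_le_mul_of_nonneg_left (norm_sub_le_of_le (hp₁ n hn) (hp₀ n hn)) (norm_nonneg t⁻¹))
  have hsupp : (c ξ).support ⊆ (t⁻¹ • (ofPairs p₁ - ofPairs p₀)).support := by
    refine support_subset_of_isBigO_sub (hf ξ).1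
      ((hbdd.sub ((hf ξ).2.2.isBigO_one ℝ)).congr_left fun n => ?_)
    simp only [map_add, map_smul, map_sub, smul_eq_mul]
    linear_combination (hf ξ).apply_eq n + f n ξ * inv_mul_cancel₀ ht0
  calc (c ξ).support.card ≤ ((ofPairs p₁).support ∪ (ofPairs p₀).support).card :=
        Finset.card_le_card (hsupp.trans (Finsupp.support_smul.trans Finsupp.support_sub))
    _ ≤ k + k := (Finset.card_union_le _ _).trans
        (add_le_add (card_support_ofPairs_le p₁) (card_support_ofPairs_le p₀))

end Baire

theorem continuous_of_baireSpace [UniformSpace E] [IsUniformAddGroup E] [ContinuousSMul K E]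
    [BaireSpace E] (f : ℕ → E →L[K] K) {c : E → ℝ →₀ K} {w : E → ℕ → K} {L : E → K}
    (hf : ∀ ξ, FPDecomp (fun n => f n ξ) (c ξ) (w ξ) (L ξ)) :
    Continuous L ∧ ∀ α, Continuous fun ξ => c ξ α := by
  obtain ⟨m, hm⟩ := exists_card_support_le f hf
  obtain ⟨hc, -⟩ := isLinearMap (fun n => (f n : E →ₗ[K] K)) hf
  obtain ⟨ξ₀, hξ₀⟩ := Finsupp.exists_support_subset_of_card_le (hc.mk' c) hm
  exact continuous_of_support_subset _ (hf ξ₀).1 f hξ₀ hf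

end FPDecomp

open Uniformity

theorem finite_part_continuity_inductive_limit_general {𝕜 : Type*} [RCLike 𝕜] {ι : Type*}
    (Xi : ι → Type*) [∀ i, AddCommGroup (Xi i)] [∀ i, Module 𝕜 (Xi i)]
    [∀ i, UniformSpace (Xi i)]
    [∀ i, IsUniformAddGroup (Xi i)] [∀ i, ContinuousSMul 𝕜 (Xi i)] [∀ i, CompleteSpace (Xi i)]
    [∀ i, TopologicalSpace.MetrizableSpace (Xi i)]
    {X : Type*} [AddCommGroup X] [Module 𝕜 X]
    [TopologicalSpace X]
    (u : ∀ i, Xi i →ₗ[𝕜] X)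
    (hchar : ∀ f : X →ₗ[𝕜] 𝕜, Continuous f ↔ ∀ i, Continuous (f ∘ u i))
    (y : ℕ → X →L[𝕜] 𝕜) (R : X → ℝ →₀ 𝕜) (z : X → ℕ → 𝕜) (Y : X → 𝕜)
    (h : ∀ x : X, FPDecomp (fun n => y n x) (R x) (z x) (Y x)) :
    (∃ Yc : X →L[𝕜] 𝕜, ∀ x : X, Yc x = Y x) ∧
    (∀ α : ℝ, ∃ Rc : X →L[𝕜] 𝕜, ∀ x : X, Rc x = R x α) := by
  have hu : ∀ n i, Continuous ((y n : X →ₗ[𝕜] 𝕜) ∘ u i) := fun n =>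
    (hchar _).1 (y n).continuous
  obtain ⟨hR, hY⟩ := FPDecomp.isLinearMap (fun n => (y n : X →ₗ[𝕜] 𝕜)) h
  have hpull : ∀ i, Continuous (Y ∘ u i) ∧ ∀ α, Continuous fun ξ => R (u i ξ) α := fun i => by
    -- together with completeness, this makes `Xi i` completely metrizable, hence a Baire space
    have : (𝓤 (Xi i)).IsCountablyGenerated := IsUniformAddGroup.uniformity_countably_generated
    exact FPDecomp.continuous_of_baireSpace (fun n => ⟨(y n : X →ₗ[𝕜] 𝕜).comp (u i), hu n i⟩)
      fun ξ => h (u i ξ)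
  exact ⟨⟨⟨hY.mk' Y, (hchar _).2 fun i => (hpull i).1⟩, fun _ => rfl⟩,
    fun α => ⟨⟨(Finsupp.lapply α).comp (hR.mk' R), (hchar _).2 fun i => (hpull i).2 α⟩,
      fun _ => rfl⟩⟩

/-- Let `X` be a locally convex space carrying the final locally convex topology induced by a
family of linear maps `u i : Xᵢ → X` from Fréchet spaces `Xᵢ`; this is expressed by the
characterization that a linear functional on `X` is continuous iff all its pullbacks along the
`u i` are continuous. If `(y n)` is a sequence in `X'` such that the finite part limit
`Y x = F.p. lim ⟨yₙ, x⟩` exists for each `x`, then `Y ∈ X'` and each coefficient functional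
`x ↦ R_α(x)` is continuous (i.e. agrees with a continuous linear functional). -/
theorem finite_part_continuity_inductive_limit {𝕜 : Type*} [RCLike 𝕜] {ι : Type*}
    (Xi : ι → Type*) [∀ i, AddCommGroup (Xi i)] [∀ i, Module 𝕜 (Xi i)]
    [∀ i, Module ℝ (Xi i)] [∀ i, IsScalarTower ℝ 𝕜 (Xi i)] [∀ i, UniformSpace (Xi i)]
    [∀ i, IsUniformAddGroup (Xi i)] [∀ i, ContinuousSMul 𝕜 (Xi i)] [∀ i, CompleteSpace (Xi i)]
    [∀ i, TopologicalSpace.MetrizableSpace (Xi i)] [∀ i, LocallyConvexSpace ℝ (Xi i)]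
    {X : Type*} [AddCommGroup X] [Module 𝕜 X] [Module ℝ X] [IsScalarTower ℝ 𝕜 X]
    [TopologicalSpace X] [IsTopologicalAddGroup X] [ContinuousSMul 𝕜 X]
    [LocallyConvexSpace ℝ X]
    (u : ∀ i, Xi i →ₗ[𝕜] X) (hcont : ∀ i, Continuous (u i))
    (hchar : ∀ f : X →ₗ[𝕜] 𝕜, Continuous f ↔ ∀ i, Continuous (f ∘ u i))
    (y : ℕ → X →L[𝕜] 𝕜) (R : X → ℝ →₀ 𝕜) (z : X → ℕ → 𝕜) (Y : X → 𝕜)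
    (h : ∀ x : X, FPDecomp (fun n => y n x) (R x) (z x) (Y x)) :
    (∃ Yc : X →L[𝕜] 𝕜, ∀ x : X, Yc x = Y x) ∧
    (∀ α : ℝ, ∃ Rc : X →L[𝕜] 𝕜, ∀ x : X, Rc x = R x α) :=
  finite_part_continuity_inductive_limit_general Xi u hchar y R z Y h
end
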